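/- arXiv:2305.02980 — 4 statements merged into one kernel-verified Lean document; each statement's English description precedes it below -/
import Mathlib

section
/- Let F : C → D and G : D → C be exact functors between triangulated categories with F ⊣ G such that the unit η : Id_C → GF admits a natural retraction. Then a triangle X → Y → Z → X[1] in C is distinguished if and only if its image FX → FY → FZ → FX[1] is distinguished in D. -/
/-!
The retraction `σ` of the unit descends a morphism `δ : F A ⟶ F B` to
`η_A ≫ G δ ≫ σ_B : A ⟶ B`. This inverts `F.map` and commutes with composition by morphisms of `C`,
so `F` reflects isomorphisms, and a morphism from the image of a cone triangle on `T.mor₁` to the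
image of `T` which is the identity on the first two objects descends to a morphism of triangles
in `C`. By the five lemma in `D` its image is an isomorphism, hence so is the morphism itself, and
`T` is isomorphic to the cone triangle.
-/

open CategoryTheory Limits Pretriangulated

namespace CategoryTheory

namespace Adjunction

variable {C D : Type*} [Category* C] [Category* D] {F : C ⥤ D} {G : D ⥤ C}
  (adj : F ⊣ G) (σ : F ⋙ G ⟶ 𝟭 C)

def descend {A B : C} (δ : F.obj A ⟶ F.obj B) : A ⟶ B :=
  adj.unit.app A ≫ G.map δ ≫ σ.app B

lemma descend_map_comp {A A' B : C} (a : A ⟶ A') (δ : F.obj A' ⟶ F.obj B) :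
    adj.descend σ (F.map a ≫ δ) = a ≫ adj.descend σ δ := by
  simp [descend]

lemma descend_comp_map {A B B' : C} (δ : F.obj A ⟶ F.obj B) (b : B ⟶ B') :
    adj.descend σ (δ ≫ F.map b) = adj.descend σ δ ≫ b := by
  simp only [descend, G.map_comp, Category.assoc]
  congr 2
  exact σ.naturality b

variable {adj σ}

lemma descend_id (hσ : adj.unit ≫ σ = 𝟙 (𝟭 C)) (A : C) :
    adj.descend σ (𝟙 (F.obj A)) = 𝟙 A := by
  simpa [descend] using NatTrans.congr_app hσ A

lemma descend_map (hσ : adj.unit ≫ σ = 𝟙 (𝟭 C)) {A B : C} (f : A ⟶ B) :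
    adj.descend σ (F.map f) = f := by
  rw [← Category.comp_id (F.map f), descend_map_comp, descend_id hσ, Category.comp_id]

lemma reflectsIsomorphisms_of_unit_retraction (hσ : adj.unit ≫ σ = 𝟙 (𝟭 C)) :
    F.ReflectsIsomorphisms where
  reflects f _ :=
    ⟨adj.descend σ (inv (F.map f)),
      by rw [← descend_map_comp, IsIso.hom_inv_id, descend_id hσ],
      by rw [← descend_comp_map, IsIso.inv_hom_id, descend_id hσ]⟩

variable [HasShift C ℤ] [HasShift D ℤ] [F.CommShift ℤ]

lemma exists_triangle_hom_of_map (hσ : adj.unit ≫ σ = 𝟙 (𝟭 C)) {T' T : Triangle C}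
    (u : F.mapTriangle.obj T' ⟶ F.mapTriangle.obj T) (a : T'.obj₁ ⟶ T.obj₁)
    (b : T'.obj₂ ⟶ T.obj₂) (ha : u.hom₁ = F.map a) (hb : u.hom₂ = F.map b) :
    ∃ φ : T' ⟶ T, φ.hom₁ = a ∧ φ.hom₂ = b := by
  obtain ⟨u₁, u₂, u₃, comm₁, comm₂, comm₃⟩ := u
  -- `rw` does not see through `F.mapTriangle.obj`, so restate everything over `F.obj`.
  change F.obj T'.obj₁ ⟶ F.obj T.obj₁ at u₁
  change F.obj T'.obj₂ ⟶ F.obj T.obj₂ at u₂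
  change F.obj T'.obj₃ ⟶ F.obj T.obj₃ at u₃
  change F.map T'.mor₁ ≫ u₂ = u₁ ≫ F.map T.mor₁ at comm₁
  change F.map T'.mor₂ ≫ u₃ = u₂ ≫ F.map T.mor₂ at comm₂
  change (F.map T'.mor₃ ≫ (F.commShiftIso 1).hom.app T'.obj₁) ≫ u₁⟦1⟧' =
    u₃ ≫ F.map T.mor₃ ≫ (F.commShiftIso 1).hom.app T.obj₁ at comm₃
  subst ha hb
  refine ⟨Triangle.homMk T' T a b (adj.descend σ u₃) ?_ ?_ ?_, rfl, rfl⟩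
  · rw [← descend_map hσ (_ ≫ b), F.map_comp, comm₁, ← F.map_comp, descend_map hσ]
  · rw [← descend_map_comp, comm₂, ← F.map_comp, descend_map hσ]
  · rw [Category.assoc, ← F.commShiftIso_hom_naturality, ← Category.assoc, ← Category.assoc,
      cancel_mono, ← F.map_comp] at comm₃
    rw [← descend_map hσ (_ ≫ _), comm₃, descend_comp_map]

end Adjunction

namespace Functor

variable {C D : Type*} [Category* C] [Category* D]
  [HasZeroObject C] [HasZeroObject D] [Preadditive C] [Preadditive D]
  [HasShift C ℤ] [HasShift D ℤ]
  [∀ n : ℤ, (shiftFunctor C n).Additive] [∀ n : ℤ, (shiftFunctor D n).Additive]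
  [Pretriangulated C] [Pretriangulated D]

lemma distinguished_of_hom_of_map_distinguished (F : C ⥤ D) [F.CommShift ℤ] [F.IsTriangulated]
    [F.ReflectsIsomorphisms] {T' T : Triangle C} (u : T' ⟶ T) (hT' : T' ∈ distTriang C)
    (hFT : F.mapTriangle.obj T ∈ distTriang D) (h₁ : IsIso u.hom₁) (h₂ : IsIso u.hom₂) :
    T ∈ distTriang C := by
  have : IsIso (F.map u.hom₃) :=
    isIso₃_of_isIso₁₂ (F.mapTriangle.map u) (F.map_distinguished _ hT') hFT
      (inferInstanceAs (IsIso (F.map u.hom₁))) (inferInstanceAs (IsIso (F.map u.hom₂)))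
  have : IsIso u.hom₃ := isIso_of_reflects_iso _ F
  have : IsIso u := Triangle.isIso_of_isIsos u h₁ h₂ this
  exact isomorphic_distinguished _ hT' _ (asIso u).symm

end Functor

end CategoryTheory

/-- If `F ⊣ G` are exact functors between idempotent-complete triangulated categories and the
unit admits a natural retraction, then a triangle in `C` is distinguished if and only if its
image under `F` is distinguished in `D`. -/
theorem distinguished_iff_image_distinguished
    {C D : Type*} [Category C] [Category D]
    [HasZeroObject C] [HasZeroObject D] [Preadditive C] [Preadditive D]
    [HasShift C ℤ] [HasShift D ℤ]
    [∀ n : ℤ, (shiftFunctor C n).Additive] [∀ n : ℤ, (shiftFunctor D n).Additive]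
    [Pretriangulated C] [Pretriangulated D]
    [IsIdempotentComplete C] [IsIdempotentComplete D]
    (F : C ⥤ D) (G : D ⥤ C) [F.CommShift ℤ] [G.CommShift ℤ]
    [F.IsTriangulated] [G.IsTriangulated]
    (adj : F ⊣ G)
    (σ : F ⋙ G ⟶ 𝟭 C) (hσ : adj.unit ≫ σ = 𝟙 (𝟭 C)) :
    ∀ T : Triangle C, (T ∈ distTriang C) ↔ (F.mapTriangle.obj T ∈ distTriang D) := by
  have := Adjunction.reflectsIsomorphisms_of_unit_retraction hσ
  intro T
  refine ⟨F.map_distinguished T, fun hFT => ?_⟩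
  obtain ⟨Z, g, h, hT'⟩ := distinguished_cocone_triangle T.mor₁
  obtain ⟨e, he₁, he₂⟩ :=
    exists_iso_of_arrow_iso _ _ (F.map_distinguished _ hT') hFT (Iso.refl _)
  obtain ⟨φ, hφ₁, hφ₂⟩ := Adjunction.exists_triangle_hom_of_map hσ e.hom (𝟙 T.obj₁) (𝟙 T.obj₂)
    (he₁.trans (F.map_id _).symm) (he₂.trans (F.map_id _).symm)
  exact F.distinguished_of_hom_of_map_distinguished φ hT' hFT
    (hφ₁ ▸ IsIso.id _) (hφ₂ ▸ IsIso.id _)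
end

section
/- Let F : C → D, G : D → C with F ⊣ G, and suppose the unit η : Id_C → GF is split (admits a natural retraction). Then for the comonad S = FG on D, the counit θ : S → Id_D composed with the natural splitting exhibits every S-comodule as a retract in the following sense: the unit of the adjunction between the forgetful functor from S-comodules to D and the cofree comodule functor is naturally split. -/
/-!
At a comodule `(X, a)` the retraction of the unit `a : X ⟶ FGX` is the transpose
`F (G a ≫ σ_{GX}) ≫ ε_X` of the endomorphism `G a ≫ σ_{GX}` of `GX`. Coassociativity rewrites
`a ≫ F (G a)` as `a ≫ F η_{GX}`, after which `η ≫ σ = 𝟙` and the counit law give `a ≫ r = 𝟙`.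
Pushed through the naturality of `σ`, the same identity says that `G a ≫ σ_{GX}` equalizes `G a`
and `η_{GX}`, which is exactly what makes its transpose a comodule map out of the cofree comodule.
-/

open CategoryTheory

namespace CategoryTheory.Adjunction

variable {C D : Type*} [Category C] [Category D] {F : C ⥤ D} {G : D ⥤ C} (adj : F ⊣ G)

lemma map_unit_comp_map_map_transpose_eq {X : D} {a : X ⟶ F.obj (G.obj X)}
    {t : G.obj X ⟶ G.obj X} (ht : t ≫ G.map a = t ≫ adj.unit.app (G.obj X)) :
    F.map (adj.unit.app (G.obj X)) ≫ F.map (G.map (F.map t ≫ adj.counit.app X)) =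
      (F.map t ≫ adj.counit.app X) ≫ a := by
  have hε : F.map (G.map a) ≫ adj.counit.app (F.obj (G.obj X)) = adj.counit.app X ≫ a :=
    adj.counit_naturality a
  calc F.map (adj.unit.app (G.obj X)) ≫ F.map (G.map (F.map t ≫ adj.counit.app X))
      = F.map t := by rw [← F.map_comp]; simp
    _ = F.map (t ≫ G.map a) ≫ adj.counit.app (F.obj (G.obj X)) := by simp [ht]
    _ = (F.map t ≫ adj.counit.app X) ≫ a := by rw [F.map_comp_assoc, hε, Category.assoc]

variable (σ : F ⋙ G ⟶ 𝟭 C)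

def coactionRetraction {X : D} (a : X ⟶ F.obj (G.obj X)) : F.obj (G.obj X) ⟶ X :=
  F.map (G.map a ≫ σ.app (G.obj X)) ≫ adj.counit.app X

lemma map_comp_app_comp_map_eq_comp_unit {X : D} {a : X ⟶ F.obj (G.obj X)}
    (ha : a ≫ F.map (G.map a) = a ≫ F.map (adj.unit.app (G.obj X))) :
    (G.map a ≫ σ.app (G.obj X)) ≫ G.map a =
      (G.map a ≫ σ.app (G.obj X)) ≫ adj.unit.app (G.obj X) := by
  have hσa := σ.naturality (G.map a)
  have hση := σ.naturality (adj.unit.app (G.obj X))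
  dsimp at hσa hση
  rw [Category.assoc, Category.assoc, ← hσa, ← G.map_comp_assoc, ha, G.map_comp_assoc, hση]

lemma map_map_comp_coactionRetraction {X Y : D} {a : X ⟶ F.obj (G.obj X)}
    {b : Y ⟶ F.obj (G.obj Y)} {f : X ⟶ Y} (hf : a ≫ F.map (G.map f) = f ≫ b) :
    F.map (G.map f) ≫ adj.coactionRetraction σ b = adj.coactionRetraction σ a ≫ f := by
  have hσ := σ.naturality (G.map f)
  dsimp at hσ
  have ht : G.map f ≫ G.map b ≫ σ.app (G.obj Y) = (G.map a ≫ σ.app (G.obj X)) ≫ G.map f := by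
    rw [← G.map_comp_assoc, ← hf, G.map_comp_assoc, hσ, Category.assoc]
  rw [coactionRetraction, coactionRetraction, ← F.map_comp_assoc, ht, F.map_comp_assoc,
    Category.assoc, counit_naturality]

lemma comp_coactionRetraction (hσ : adj.unit ≫ σ = 𝟙 (𝟭 C)) {X : D}
    {a : X ⟶ F.obj (G.obj X)} (ha : a ≫ F.map (G.map a) = a ≫ F.map (adj.unit.app (G.obj X)))
    (ha' : a ≫ adj.counit.app X = 𝟙 X) :
    a ≫ adj.coactionRetraction σ a = 𝟙 X := by
  have hσX : adj.unit.app (G.obj X) ≫ σ.app (G.obj X) = 𝟙 (G.obj X) := NatTrans.congr_app hσ _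
  rw [coactionRetraction, F.map_comp_assoc, reassoc_of% ha, ← F.map_comp_assoc, hσX, F.map_id,
    Category.id_comp, ha']

def cofreeRetraction :
    adj.toComonad.forget ⋙ adj.toComonad.cofree ⟶ 𝟭 adj.toComonad.Coalgebra where
  app A :=
    { f := adj.coactionRetraction σ A.a
      h := adj.map_unit_comp_map_map_transpose_eq
        (adj.map_comp_app_comp_map_eq_comp_unit σ A.coassoc.symm) }
  naturality _ _ g := by
    ext
    exact adj.map_map_comp_coactionRetraction σ g.h

end CategoryTheory.Adjunction

/-- If the unit of `F ⊣ G` is naturally split, then for the comonad `S = F ∘ G` on `D`, the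
unit of the adjunction between the forgetful functor from `S`-comodules and the cofree
comodule functor is naturally split. -/
theorem comodule_forget_cofree_unit_split
    {C D : Type*} [Category C] [Category D]
    (F : C ⥤ D) (G : D ⥤ C) (adj : F ⊣ G)
    (σ : F ⋙ G ⟶ 𝟭 C) (hσ : adj.unit ≫ σ = 𝟙 (𝟭 C)) :
    ∃ r : adj.toComonad.forget ⋙ adj.toComonad.cofree ⟶ 𝟭 adj.toComonad.Coalgebra,
      adj.toComonad.adj.unit ≫ r = 𝟙 (𝟭 adj.toComonad.Coalgebra) := by
  refine ⟨adj.cofreeRetraction σ, ?_⟩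
  ext A
  simp only [NatTrans.comp_app, Comonad.adj_unit]
  exact adj.comp_coactionRetraction σ hσ A.coassoc.symm A.counit
end

section
/- Let F ⊣ G be an adjunction of exact functors between idempotent-complete triangulated categories C, D, such that the unit η : Id_C → GF admits a natural retraction. Then the comparison functor C → Comod_S(D) induced by F, where S = FG, is an equivalence of categories. -/
open CategoryTheory Limits Pretriangulated

/-- If `F ⊣ G` is an adjunction of exact functors between idempotent-complete triangulated
categories whose unit admits a natural retraction, then the comparison functor from `C` to
the category of comodules (coalgebras) over the comonad `S = F ∘ G` is an equivalence. -/
theorem comparison_equivalence_of_split_unit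
    {C D : Type*} [Category C] [Category D]
    [HasZeroObject C] [HasZeroObject D] [Preadditive C] [Preadditive D]
    [HasShift C ℤ] [HasShift D ℤ]
    [∀ n : ℤ, (shiftFunctor C n).Additive] [∀ n : ℤ, (shiftFunctor D n).Additive]
    [Pretriangulated C] [Pretriangulated D]
    [IsIdempotentComplete C] [IsIdempotentComplete D]
    (F : C ⥤ D) (G : D ⥤ C) [F.CommShift ℤ] [G.CommShift ℤ]
    [F.IsTriangulated] [G.IsTriangulated]
    (adj : F ⊣ G)
    (σ : F ⋙ G ⟶ 𝟭 C) (hσ : adj.unit ≫ σ = 𝟙 (𝟭 C)) :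
    (Comonad.comparison adj).IsEquivalence := by
  have hσ' : ∀ X : C, adj.unit.app X ≫ σ.app X = 𝟙 X := fun X =>
    congrArg (fun t => NatTrans.app t X) hσ
  have hK : ∀ X, ((Comonad.comparison adj).obj X).a = F.map (adj.unit.app X) := fun X => rfl
  -- faithful
  have hfaith : (Comonad.comparison adj).Faithful := by
    constructor
    intro X Y f g h
    have h' : F.map f = F.map g := congrArg Comonad.Coalgebra.Hom.f h
    have : adj.unit.app X ≫ G.map (F.map f) ≫ σ.app Y =
        adj.unit.app X ≫ G.map (F.map g) ≫ σ.app Y := by rw [h']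
    have nf : ∀ h : X ⟶ Y, adj.unit.app X ≫ G.map (F.map h) ≫ σ.app Y = h := by
      intro h
      have := σ.naturality h
      dsimp at this
      rw [this, ← Category.assoc, hσ' X]
      simp
    rw [nf f, nf g] at this
    exact this
  have hfull : (Comonad.comparison adj).Full := by
    constructor
    intro X Y g
    obtain ⟨gf, hg0⟩ := g
    change F.obj X ⟶ F.obj Y at gf
    refine ⟨adj.unit.app X ≫ G.map gf ≫ σ.app Y, ?_⟩
    have hg := hg0
    change F.map (adj.unit.app X) ≫ F.map (G.map gf) = gf ≫ F.map (adj.unit.app Y) at hg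
    ext
    show F.map (adj.unit.app X ≫ G.map gf ≫ σ.app Y) = gf
    calc F.map (adj.unit.app X ≫ G.map gf ≫ σ.app Y)
        = (F.map (adj.unit.app X) ≫ F.map (G.map gf)) ≫ F.map (σ.app Y) := by
          simp [F.map_comp]
      _ = (gf ≫ F.map (adj.unit.app Y)) ≫ F.map (σ.app Y) := by rw [hg]
      _ = gf ≫ F.map (adj.unit.app Y ≫ σ.app Y) := by simp [F.map_comp]
      _ = gf := by rw [hσ' Y]; simp
  have hes : (Comonad.comparison adj).EssSurj := by
    constructor
    intro A
    obtain ⟨AA, aa, hA1, hA2⟩ := A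
    change AA ⟶ F.obj (G.obj AA) at aa
    -- basic facts about the coalgebra `A`
    have hcu : aa ≫ adj.counit.app AA = 𝟙 AA := by exact hA1
    have hco : aa ≫ F.map (adj.unit.app (G.obj AA)) = aa ≫ F.map (G.map aa) := by
      exact hA2
    -- the idempotent on `G.obj AA`
    set e : G.obj AA ⟶ G.obj AA := G.map aa ≫ σ.app (G.obj AA) with he
    have n1 := σ.naturality (G.map aa)
    have n2 := σ.naturality (adj.unit.app (G.obj AA))
    dsimp at n1 n2
    have keyfact : e ≫ G.map aa = e ≫ adj.unit.app (G.obj AA) := by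
      calc e ≫ G.map aa
          = G.map aa ≫ σ.app (G.obj AA) ≫ G.map aa := by
            rw [he, Category.assoc]
        _ = G.map aa ≫ G.map (F.map (G.map aa)) ≫ σ.app (G.obj (F.obj (G.obj AA))) := by
            rw [← n1]
        _ = G.map (aa ≫ F.map (G.map aa)) ≫ σ.app (G.obj (F.obj (G.obj AA))) := by
            rw [G.map_comp, Category.assoc]
        _ = G.map (aa ≫ F.map (adj.unit.app (G.obj AA))) ≫
              σ.app (G.obj (F.obj (G.obj AA))) := by rw [← hco]
        _ = G.map aa ≫ G.map (F.map (adj.unit.app (G.obj AA))) ≫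
              σ.app (G.obj (F.obj (G.obj AA))) := by rw [G.map_comp, Category.assoc]
        _ = G.map aa ≫ σ.app (G.obj AA) ≫ adj.unit.app (G.obj AA) := by rw [n2]
        _ = e ≫ adj.unit.app (G.obj AA) := by rw [he, Category.assoc]
    have hee : e ≫ e = e := by
      calc e ≫ e = (e ≫ G.map aa) ≫ σ.app (G.obj AA) := by
            rw [he]
            simp only [Category.assoc]
        _ = (e ≫ adj.unit.app (G.obj AA)) ≫ σ.app (G.obj AA) := by rw [keyfact]
        _ = e := by rw [Category.assoc, hσ' (G.obj AA), Category.comp_id]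
    -- split the idempotent
    obtain ⟨X0, i, r, hir, hri⟩ :=
      IsIdempotentComplete.idempotents_split (G.obj AA) e hee
    have hie : i ≫ e = i := by
      rw [← hri, ← Category.assoc, hir, Category.id_comp]
    have lem1 : i ≫ G.map aa = i ≫ adj.unit.app (G.obj AA) := by
      calc i ≫ G.map aa = i ≫ e ≫ G.map aa := by
            rw [← Category.assoc, hie]
        _ = i ≫ e ≫ adj.unit.app (G.obj AA) := by rw [keyfact]
        _ = i ≫ adj.unit.app (G.obj AA) := by rw [← Category.assoc, hie]
    -- the isomorphism
    set α : F.obj X0 ⟶ AA := F.map i ≫ adj.counit.app AA with hα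
    set β : AA ⟶ F.obj X0 := aa ≫ F.map r with hβ
    have hβα : β ≫ α = 𝟙 AA := by
      calc β ≫ α = aa ≫ F.map (r ≫ i) ≫ adj.counit.app AA := by
            rw [hα, hβ, F.map_comp]
            simp only [Category.assoc]
        _ = aa ≫ F.map (G.map aa) ≫ F.map (σ.app (G.obj AA)) ≫ adj.counit.app AA := by
            rw [hri, he, F.map_comp]
            simp only [Category.assoc]
        _ = (aa ≫ F.map (adj.unit.app (G.obj AA))) ≫ F.map (σ.app (G.obj AA)) ≫
              adj.counit.app AA := by
            rw [← Category.assoc, ← hco]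
        _ = aa ≫ F.map (adj.unit.app (G.obj AA) ≫ σ.app (G.obj AA)) ≫
              adj.counit.app AA := by
            rw [F.map_comp]
            simp only [Category.assoc]
        _ = 𝟙 AA := by
            rw [hσ' (G.obj AA), F.map_id]
            simpa using hcu
    have hαβ : α ≫ β = 𝟙 (F.obj X0) := by
      have c1 := adj.counit.naturality aa
      dsimp at c1
      have c2 := adj.counit.naturality (F.map r)
      dsimp at c2
      have u1 := adj.unit.naturality r
      dsimp at u1
      calc α ≫ β = F.map i ≫ (adj.counit.app AA ≫ aa) ≫ F.map r := by
            rw [hα, hβ]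
            simp only [Category.assoc]
        _ = F.map i ≫ F.map (G.map aa) ≫ adj.counit.app (F.obj (G.obj AA)) ≫ F.map r := by
            rw [← c1]
            simp only [Category.assoc]
        _ = F.map i ≫ F.map (G.map aa) ≫ F.map (G.map (F.map r)) ≫
              adj.counit.app (F.obj X0) := by rw [← c2]
        _ = F.map (i ≫ G.map aa ≫ G.map (F.map r)) ≫ adj.counit.app (F.obj X0) := by
            simp only [F.map_comp, Category.assoc]
        _ = F.map ((i ≫ adj.unit.app (G.obj AA)) ≫ G.map (F.map r)) ≫
              adj.counit.app (F.obj X0) := by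
            rw [← Category.assoc, lem1]
        _ = F.map (i ≫ r ≫ adj.unit.app X0) ≫ adj.counit.app (F.obj X0) := by
            rw [Category.assoc, ← u1]
        _ = F.map (adj.unit.app X0) ≫ adj.counit.app (F.obj X0) := by
            rw [← Category.assoc, hir, Category.id_comp]
        _ = 𝟙 (F.obj X0) := adj.left_triangle_components X0
    have hw : F.map (adj.unit.app X0) ≫ F.map (G.map α) = α ≫ aa := by
      have u2 := adj.unit.naturality i
      dsimp at u2
      have c1 := adj.counit.naturality aa
      dsimp at c1
      calc F.map (adj.unit.app X0) ≫ F.map (G.map α)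
          = F.map (adj.unit.app X0 ≫ G.map (F.map i) ≫ G.map (adj.counit.app AA)) := by
            simp only [hα, G.map_comp, F.map_comp]
        _ = F.map ((i ≫ adj.unit.app (G.obj AA)) ≫ G.map (adj.counit.app AA)) := by
            rw [← Category.assoc, ← u2]
        _ = F.map i := by
            rw [Category.assoc, adj.right_triangle_components AA, Category.comp_id]
        _ = F.map i ≫ F.map (adj.unit.app (G.obj AA)) ≫
              adj.counit.app (F.obj (G.obj AA)) := by
            rw [adj.left_triangle_components (G.obj AA), Category.comp_id]
        _ = F.map (i ≫ G.map aa) ≫ adj.counit.app (F.obj (G.obj AA)) := by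
            rw [lem1, F.map_comp, Category.assoc]
        _ = F.map i ≫ adj.counit.app AA ≫ aa := by
            rw [F.map_comp, Category.assoc, c1]
        _ = α ≫ aa := by rw [hα, Category.assoc]
    exact ⟨X0, ⟨Comonad.Coalgebra.isoMk ⟨α, β, hαβ, hβα⟩ hw⟩⟩
  exact { faithful := hfaith, full := hfull, essSurj := hes }
end

section
/- Let S be a separable comonad on an idempotent-complete additive category D. Then the forgetful functor F_S : Comod_S(D) → D is faithful, and the category Comod_S(D) is idempotent complete. -/
open CategoryTheory

/-- For a separable comonad `S` on an idempotent-complete additive category `D` (separability: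
the comultiplication admits a natural retraction `s` which is a map of `S`-bicomodules), the
forgetful functor from `S`-comodules is faithful and the category of `S`-comodules is
idempotent complete. -/
theorem separable_comonad_comodules_idempotent_complete
    {D : Type*} [Category D] [Preadditive D] [IsIdempotentComplete D]
    (S : Comonad D) (s : (S : D ⥤ D) ⋙ (S : D ⥤ D) ⟶ (S : D ⥤ D))
    (hret : S.δ ≫ s = 𝟙 (S : D ⥤ D))
    (hbi₁ : ∀ X : D,
      S.δ.app ((S : D ⥤ D).obj X) ≫ (S : D ⥤ D).map (s.app X) = s.app X ≫ S.δ.app X)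
    (hbi₂ : ∀ X : D,
      (S : D ⥤ D).map (S.δ.app X) ≫ s.app ((S : D ⥤ D).obj X) = s.app X ≫ S.δ.app X) :
    S.forget.Faithful ∧ IsIdempotentComplete S.Coalgebra := by
  refine ⟨inferInstance, ⟨fun X p hp => ?_⟩⟩
  have hpf : p.f ≫ p.f = p.f := congrArg Comonad.Coalgebra.Hom.f hp
  obtain ⟨Y, i, e, hie, hei⟩ := IsIdempotentComplete.idempotents_split X.A p.f hpf
  have hph : X.a ≫ (S : D ⥤ D).map p.f = p.f ≫ X.a := p.h
  have hpe : p.f ≫ e = e := by rw [← hei, Category.assoc, hie, Category.comp_id]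
  have hip : i ≫ p.f = i := by rw [← hei, ← Category.assoc, hie, Category.id_comp]
  have key : p.f ≫ X.a ≫ (S : D ⥤ D).map e = X.a ≫ (S : D ⥤ D).map e := by
    rw [← Category.assoc, ← hph, Category.assoc, ← Functor.map_comp, hpe]
  refine ⟨{ A := Y, a := i ≫ X.a ≫ (S : D ⥤ D).map e, counit := ?_, coassoc := ?_ },
    ⟨i, ?_⟩, ⟨e, ?_⟩, ?_, ?_⟩
  · -- counit
    slice_lhs 3 4 => rw [S.ε.naturality e]
    slice_lhs 2 3 => rw [X.counit]
    simp [hie]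
  · -- coassociativity
    simp only [Functor.map_comp, Category.assoc]
    slice_lhs 3 4 => rw [S.δ.naturality e]
    slice_lhs 2 3 => rw [X.coassoc]
    slice_rhs 3 4 => rw [← Functor.map_comp, hei]
    slice_rhs 2 3 => rw [hph]
    slice_rhs 1 2 => rw [hip]
    simp
  · -- i is a coalgebra hom
    show (i ≫ X.a ≫ (S : D ⥤ D).map e) ≫ (S : D ⥤ D).map i = i ≫ X.a
    slice_lhs 3 4 => rw [← Functor.map_comp, hei]
    slice_lhs 2 3 => rw [hph]
    slice_lhs 1 2 => rw [hip]
  · -- e is a coalgebra hom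
    show X.a ≫ (S : D ⥤ D).map e = e ≫ i ≫ X.a ≫ (S : D ⥤ D).map e
    slice_rhs 1 2 => rw [hei]
    rw [Category.assoc, key]
  · exact Comonad.Coalgebra.Hom.ext hie
  · exact Comonad.Coalgebra.Hom.ext hei
end
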